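/- If I ⊆ R = K[x_0,...,x_n] is a saturated strongly stable ideal whose quotient has constant Hilbert polynomial p_{R/I} = c, then some power of x_{n−1} lies in I; equivalently, the double saturation sat_{x_{n−1},x_n}(I) equals the unit ideal (1) = R. -/

import Mathlib

open MvPolynomial
open Fin.NatCast

noncomputable section

/-- The polynomial ring `K[x_0,…,x_n]` in `n+1` variables. -/
abbrev PR (K : Type*) [Field K] (n : ℕ) := MvPolynomial (Fin (n+1)) K

variable {K : Type*} [Field K] {n : ℕ}

/-- The monomial `x^A`. -/
def mon (A : Fin (n+1) →₀ ℕ) : PR K n := monomial A 1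

/-- Total degree of the monomial with exponent vector `A`. -/
def mdeg (A : Fin (n+1) →₀ ℕ) : ℕ := ∑ i, A i

/-- The largest index of a variable dividing `x^A` (0 if `A = 0`). -/
def maxIdx (A : Fin (n+1) →₀ ℕ) : Fin (n+1) := WithBot.unbotD 0 (A.support.max)

/-- The exponent vector of `(x_i / x_j) · x^A`. -/
def shiftM (A : Fin (n+1) →₀ ℕ) (i j : Fin (n+1)) : Fin (n+1) →₀ ℕ :=
  A + Finsupp.single i 1 - Finsupp.single j 1

/-- `I` is a monomial ideal: generated by a set of monomials. -/
def IsMonomialIdeal (I : Ideal (PR K n)) : Prop :=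
  ∃ S : Set (Fin (n+1) →₀ ℕ), I = Ideal.span ((fun A => (mon A : PR K n)) '' S)

/-- Strongly stable monomial ideal. -/
def StronglyStable (I : Ideal (PR K n)) : Prop :=
  ∀ A : Fin (n+1) →₀ ℕ, mon A ∈ I → ∀ i j : Fin (n+1), A j ≠ 0 → i < j →
    mon (shiftM A i j) ∈ I

/-- Stable monomial ideal. -/
def Stable (I : Ideal (PR K n)) : Prop :=
  ∀ A : Fin (n+1) →₀ ℕ, A ≠ 0 → mon A ∈ I → ∀ i : Fin (n+1), i < maxIdx A →
    mon (shiftM A i (maxIdx A)) ∈ I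

/-- `x^A` is a minimal monomial generator of `I`. -/
def MinGen (I : Ideal (PR K n)) (A : Fin (n+1) →₀ ℕ) : Prop :=
  mon A ∈ I ∧ ∀ B : Fin (n+1) →₀ ℕ, B ≤ A → B ≠ A → mon B ∉ I

/-- The set of exponent vectors of minimal monomial generators of `I`. -/
def Gens (I : Ideal (PR K n)) : Set (Fin (n+1) →₀ ℕ) := {A | MinGen I A}

/-- The irrelevant maximal ideal `(x_0,…,x_n)`. -/
def irrIdeal (K : Type*) [Field K] (n : ℕ) : Ideal (PR K n) :=
  Ideal.span (Set.range fun i : Fin (n+1) => (X i : PR K n))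

/-- `I` is saturated: `(I : (x_0,…,x_n)) = I`. -/
def Saturated (I : Ideal (PR K n)) : Prop :=
  Submodule.colon I (irrIdeal K n) = I

/-- The saturation `∪ₖ (I : (x_0,…,x_n)^k)`. -/
def saturationOf (I : Ideal (PR K n)) : Ideal (PR K n) :=
  ⨆ k : ℕ, Submodule.colon I ((irrIdeal K n) ^ k : Ideal (PR K n))

/-- The Hilbert function of `R/I`: `j ↦ dim_K [R/I]_j`. -/
def hilbF {σ : Type*} (I : Ideal (MvPolynomial σ K)) (j : ℕ) : ℕ :=
  Module.finrank K
    ((homogeneousSubmodule σ K j).map (Ideal.Quotient.mkₐ K I).toLinearMap)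

/-- `p` is the Hilbert polynomial of `R/I`. -/
def IsHilbPoly {σ : Type*} (I : Ideal (MvPolynomial σ K)) (p : Polynomial ℚ) : Prop :=
  ∃ N : ℕ, ∀ j : ℕ, N ≤ j → p.eval (j : ℚ) = (hilbF I j : ℚ)

/-- The binomial-coefficient polynomial `C(q, k) = q(q-1)⋯(q-k+1)/k!`. -/
def choosePoly (q : Polynomial ℚ) (k : ℕ) : Polynomial ℚ :=
  ((k.factorial : ℚ))⁻¹ • ∏ j ∈ Finset.range k, (q - Polynomial.C (j : ℚ))

/-- The canonical representation `p(z) = Σ_{i=0}^d [C(z+i,i+1) − C(z+i−b_i,i+1)]`. -/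
def canonicalHP (d : ℕ) (b : ℕ → ℕ) : Polynomial ℚ :=
  ∑ i ∈ Finset.range (d+1),
    (choosePoly (Polynomial.X + Polynomial.C (i : ℚ)) (i+1)
      - choosePoly (Polynomial.X + Polynomial.C (i : ℚ) - Polynomial.C (b i : ℚ)) (i+1))

/-- `x^A >_lex x^B`. -/
def LexGt (A B : Fin (n+1) →₀ ℕ) : Prop :=
  ∃ i : Fin (n+1), (∀ j : Fin (n+1), j < i → A j = B j) ∧ B i < A i

/-- `I` is a lexsegment ideal. -/
def IsLexsegment (I : Ideal (PR K n)) : Prop :=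
  IsMonomialIdeal I ∧ ∀ A B : Fin (n+1) →₀ ℕ, mdeg A = mdeg B → mon B ∈ I →
    LexGt A B → mon A ∈ I

/-- `I` is a homogeneous ideal. -/
def Homog (I : Ideal (PR K n)) : Prop :=
  ∀ f ∈ I, ∀ j : ℕ, homogeneousComponent j f ∈ I

/-- The set of right-shifts of `x^A`. -/
def rightShifts (A : Fin (n+1) →₀ ℕ) : Set (Fin (n+1) →₀ ℕ) :=
  {B | ∃ i : Fin (n+1), (i : ℕ) + 2 ≤ n ∧ A i ≠ 0 ∧
    B = shiftM A ((((i : ℕ) + 1 : ℕ)) : Fin (n+1)) i}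

/-- The set of left-shifts of `x^A`. -/
def leftShifts (A : Fin (n+1) →₀ ℕ) : Set (Fin (n+1) →₀ ℕ) :=
  {B | ∃ i : Fin (n+1), 1 ≤ (i : ℕ) ∧ (i : ℕ) + 1 ≤ n ∧ A i ≠ 0 ∧
    B = shiftM A ((((i : ℕ) - 1 : ℕ)) : Fin (n+1)) i}

/-- The monomials `x^A x_r, …, x^A x_{n-1}` with `r = max(x^A)`. -/
def expSet (A : Fin (n+1) →₀ ℕ) : Set (Fin (n+1) →₀ ℕ) :=
  {B | ∃ j : Fin (n+1), ((maxIdx A : ℕ)) ≤ (j : ℕ) ∧ (j : ℕ) + 1 ≤ n ∧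
    B = A + Finsupp.single j 1}

/-- `x^A ≠ 1` is expandable in `I`. -/
def Expandable (I : Ideal (PR K n)) (A : Fin (n+1) →₀ ℕ) : Prop :=
  A ≠ 0 ∧ MinGen I A ∧ ∀ B ∈ rightShifts A, ¬ MinGen I B

/-- `x^A ≠ 1` is contractible in `I`. -/
def Contractible (I : Ideal (PR K n)) (A : Fin (n+1) →₀ ℕ) : Prop :=
  A ≠ 0 ∧ mon A ∉ I ∧ MinGen I (A + Finsupp.single (((n - 1 : ℕ)) : Fin (n+1)) 1) ∧
    ∀ B ∈ leftShifts A, mon B ∈ I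

/-- The expansion of `x^A` in `I`. -/
def expansionIdeal (I : Ideal (PR K n)) (A : Fin (n+1) →₀ ℕ) : Ideal (PR K n) :=
  Ideal.span ((fun B => (mon B : PR K n)) '' ((Gens I \ {A}) ∪ expSet A))

/-- The contraction of `x^A` in `I`. -/
def contractionIdeal (I : Ideal (PR K n)) (A : Fin (n+1) →₀ ℕ) : Ideal (PR K n) :=
  Ideal.span ((fun B => (mon B : PR K n)) '' ((Gens I ∪ {A}) \ expSet A))

/-- Setting `x_{n-1} = x_n = 1` in the exponent vector `A`. -/
def stripLastTwo (A : Fin (n+1) →₀ ℕ) : Fin (n+1) →₀ ℕ :=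
  Finsupp.update (Finsupp.update A (((n : ℕ)) : Fin (n+1)) 0) (((n - 1 : ℕ)) : Fin (n+1)) 0

/-- The double saturation `sat_{x_{n-1},x_n}(I)` (as an ideal of `R`). -/
def doubleSat (I : Ideal (PR K n)) : Ideal (PR K n) :=
  Ideal.span ((fun A => (mon (stripLastTwo A) : PR K n)) '' Gens I)

/-- Restriction of an exponent vector to the first `n` variables. -/
def restrictExp (A : Fin (n+1) →₀ ℕ) : Fin n →₀ ℕ :=
  Finsupp.comapDomain Fin.castSucc A (Fin.castSucc_injective n).injOn

/-- The ideal `I · R^{(1)}` in `K[x_0,…,x_{n-1}]` (for saturated monomial `I`). -/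
def restrictIdeal (I : Ideal (PR K n)) : Ideal (MvPolynomial (Fin n) K) :=
  Ideal.span ((fun A => (monomial (restrictExp A) (1 : K) : MvPolynomial (Fin n) K)) '' Gens I)

/-- Lex order on exponent vectors in `n` variables. -/
def LexGt' (A B : Fin n →₀ ℕ) : Prop :=
  ∃ i : Fin n, (∀ j : Fin n, j < i → A j = B j) ∧ B i < A i

/-- Monomial ideal in `K[x_0,…,x_{n-1}]`. -/
def IsMonomialIdeal' (I : Ideal (MvPolynomial (Fin n) K)) : Prop :=
  ∃ S : Set (Fin n →₀ ℕ),
    I = Ideal.span ((fun A => (monomial A (1 : K) : MvPolynomial (Fin n) K)) '' S)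

/-- Lexsegment ideal in `K[x_0,…,x_{n-1}]`. -/
def IsLexsegment' (I : Ideal (MvPolynomial (Fin n) K)) : Prop :=
  IsMonomialIdeal' I ∧ ∀ A B : Fin n →₀ ℕ, (∑ i, A i) = (∑ i, B i) →
    monomial B (1 : K) ∈ I → LexGt' A B → monomial A (1 : K) ∈ I

/-- `I` is almost lexsegment: saturated strongly stable with `I·R^{(1)}` lexsegment. -/
def AlmostLex (I : Ideal (PR K n)) : Prop :=
  IsMonomialIdeal I ∧ StronglyStable I ∧ Saturated I ∧ IsLexsegment' (restrictIdeal I)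

/-- A graded free resolution of the ideal `I`, with `rank i` the rank of the `i`-th
free module and `twist i k` the degrees of the standard basis elements. -/
structure GradedFreeRes (I : Ideal (PR K n)) where
  rank : ℕ → ℕ
  twist : (i : ℕ) → Fin (rank i) → ℕ
  diff : (i : ℕ) → ((Fin (rank (i+1)) → PR K n) →ₗ[PR K n] (Fin (rank i) → PR K n))
  aug : (Fin (rank 0) → PR K n) →ₗ[PR K n] PR K n
  aug_range : LinearMap.range aug = I
  aug_graded : ∀ k, aug (Pi.single k 1) ∈ homogeneousSubmodule (Fin (n+1)) K (twist 0 k)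
  diff_graded : ∀ i k l, diff i (Pi.single k 1) l = 0 ∨
    (twist i l ≤ twist (i+1) k ∧
      diff i (Pi.single k 1) l ∈ homogeneousSubmodule (Fin (n+1)) K (twist (i+1) k - twist i l))
  exact_aug : LinearMap.range (diff 0) = LinearMap.ker aug
  exact_diff : ∀ i, LinearMap.range (diff (i+1)) = LinearMap.ker (diff i)

/-- A resolution is minimal if all differential entries lie in the irrelevant ideal. -/
def MinimalRes {I : Ideal (PR K n)} (F : GradedFreeRes I) : Prop :=
  ∀ i k l, constantCoeff (F.diff i (Pi.single k 1) l) = 0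

end

/-! A monomial ideal contains every monomial occurring in one of its elements, so the monomials
outside `I` stay linearly independent in `R/I`. If no power of `x_{n-1}` lay in the strongly
stable ideal `I`, then moving factors `x_n` to `x_{n-1}` would keep every `x_{n-1}^a x_n^{d-a}`
outside `I`; these `d + 1` monomials would force `dim_K [R/I]_d ≥ d + 1`, contradicting the
constant Hilbert polynomial. The least power of `x_{n-1}` in `I` is then a minimal generator,
and setting `x_{n-1} = x_n = 1` turns it into `1`. -/

section

variable {K : Type*} [Field K] {n : ℕ}

theorem IsMonomialIdeal.mon_mem_of_mem_support {I : Ideal (PR K n)} (hI : IsMonomialIdeal I)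
    {f : PR K n} (hf : f ∈ I) {A : Fin (n+1) →₀ ℕ} (hA : A ∈ f.support) :
    mon A ∈ I := by
  obtain ⟨S, rfl⟩ := hI
  obtain ⟨B, hB, hBA⟩ := mem_ideal_span_monomial_image.1 hf A hA
  refine mem_ideal_span_monomial_image.2 fun A' hA' => ⟨B, hB, ?_⟩
  rwa [Finset.mem_singleton.1 (support_monomial_subset hA')]

theorem IsMonomialIdeal.card_le_hilbF {I : Ideal (PR K n)} (hI : IsMonomialIdeal I) {d : ℕ}
    (s : Finset (Fin (n+1) →₀ ℕ)) (hdeg : ∀ A ∈ s, mdeg A = d)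
    (hout : ∀ A ∈ s, mon A ∉ I) : s.card ≤ hilbF I d := by
  set π := (Ideal.Quotient.mkₐ K I).toLinearMap
  set v : s → PR K n := fun A => mon A
  have hfin : Module.Finite K ((homogeneousSubmodule (Fin (n+1)) K d).map π) :=
    Module.Finite.iff_fg.2 ((homogeneousSubmodule_fg (Fin (n+1)) K d).map π)
  have hv : LinearIndependent K v :=
    (basisMonomials (Fin (n+1)) K).linearIndependent.comp _ Subtype.val_injective
  have hdisj : Disjoint (Submodule.span K (Set.range v)) (LinearMap.ker π) := by
    refine Submodule.disjoint_def.2 fun f hspan hker => ?_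
    have hsupp : f.support ⊆ s := Finset.coe_subset.1 <| (mem_restrictSupport_iff K).1 <|
      Submodule.span_le.2 (Set.range_subset_iff.2 fun A =>
        (monomial_mem_restrictSupport K).2 (Or.inl A.2)) hspan
    have hfI : f ∈ I := Ideal.Quotient.eq_zero_iff_mem.1 hker
    by_contra hf
    obtain ⟨A, hA⟩ := support_nonempty.2 hf
    exact hout A (hsupp hA) (hI.mon_mem_of_mem_support hfI hA)
  calc s.card = Module.finrank K (Submodule.span K (Set.range (π ∘ v))) := by
        rw [finrank_span_eq_card (hv.map hdisj), Fintype.card_coe]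
    _ ≤ hilbF I d := by
      refine Submodule.finrank_mono (Submodule.span_le.2 (Set.range_subset_iff.2 fun A => ?_))
      refine Submodule.mem_map_of_mem ?_
      exact isHomogeneous_monomial _ (by rw [Finsupp.degree_eq_sum]; exact hdeg A A.2)

theorem mon_add_mem {I : Ideal (PR K n)} {A : Fin (n+1) →₀ ℕ} (B : Fin (n+1) →₀ ℕ)
    (h : mon A ∈ I) : mon (B + A) ∈ I := by
  simpa [mon, monomial_mul] using I.mul_mem_left (monomial B 1) h

theorem shiftM_single_add_single (i j : Fin (n+1)) (a b : ℕ) :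
    shiftM (Finsupp.single i a + Finsupp.single j (b+1)) i j
      = Finsupp.single i (a+1) + Finsupp.single j b := by
  rw [shiftM, Finsupp.single_add, Finsupp.single_add, add_right_comm, ← add_assoc,
    add_tsub_cancel_right]

theorem StronglyStable.mon_single_add_mem {I : Ideal (PR K n)} (hss : StronglyStable I)
    {i j : Fin (n+1)} (hij : i < j) {a b : ℕ}
    (h : mon (Finsupp.single i a + Finsupp.single j b) ∈ I) :
    mon (Finsupp.single i (a + b)) ∈ I := by
  induction b generalizing a with
  | zero => simpa using h
  | succ b ih =>
    have hj : (Finsupp.single i a + Finsupp.single j (b+1)) j ≠ 0 := by simp [hij.ne]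
    have hshift := hss _ h i j hj hij
    rw [shiftM_single_add_single] at hshift
    simpa [add_right_comm, add_assoc] using ih hshift

theorem StronglyStable.succ_le_hilbF {I : Ideal (PR K n)} (hI : IsMonomialIdeal I)
    (hss : StronglyStable I) {i j : Fin (n+1)} (hij : i < j)
    (hpow : ∀ k, mon (Finsupp.single i k) ∉ I) (d : ℕ) : d + 1 ≤ hilbF I d := by
  set E : ℕ → Fin (n+1) →₀ ℕ := fun a => Finsupp.single i a + Finsupp.single j (d - a)
  have hE : ∀ a, E a i = a := fun a => by simp [E, hij.ne]
  have hEinj : Set.InjOn E (Finset.range (d+1)) := fun a _ b _ hab => by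
    simpa [hE] using congrArg (· i) hab
  have hdeg : ∀ a ∈ Finset.range (d+1), mdeg (E a) = d := fun a ha => by
    rw [mdeg, ← Finsupp.degree_eq_sum, map_add, Finsupp.degree_single, Finsupp.degree_single]
    exact Nat.add_sub_cancel' (Finset.mem_range_succ_iff.1 ha)
  have hout : ∀ a ∈ Finset.range (d+1), mon (E a) ∉ I := fun a ha hmem => by
    have := hss.mon_single_add_mem hij hmem
    rw [Nat.add_sub_cancel' (Finset.mem_range_succ_iff.1 ha)] at this
    exact hpow d this
  calc d + 1 = ((Finset.range (d+1)).image E).card := by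
        rw [Finset.card_image_of_injOn hEinj, Finset.card_range]
    _ ≤ hilbF I d := hI.card_le_hilbF _ (by simpa using hdeg) (by simpa using hout)

theorem StronglyStable.exists_mon_single_mem {I : Ideal (PR K n)} (hI : IsMonomialIdeal I)
    (hss : StronglyStable I) {i j : Fin (n+1)} (hij : i < j) {c : ℕ}
    (hp : IsHilbPoly I (Polynomial.C (c : ℚ))) : ∃ k, mon (Finsupp.single i k) ∈ I := by
  by_contra! hpow
  obtain ⟨N, hN⟩ := hp
  have hc := hN (max N (c+1)) (le_max_left _ _)
  rw [Polynomial.eval_C] at hc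
  have hle := hss.succ_le_hilbF hI hij hpow (max N (c+1))
  have hceq : c = hilbF I (max N (c+1)) := by exact_mod_cast hc
  omega

theorem exists_minGen_single {I : Ideal (PR K n)} {i : Fin (n+1)}
    (h : ∃ k, mon (Finsupp.single i k) ∈ I) : ∃ k, MinGen I (Finsupp.single i k) := by
  classical
  refine ⟨Nat.find h, Nat.find_spec h, fun B hB hne hBI => ?_⟩
  have hBi : B = Finsupp.single i (B i) := by
    ext l
    by_cases hl : l = i
    · simp [hl]
    · simpa [hl, Finsupp.single_apply, Ne.symm hl] using hB l
  have hlt : B i < Nat.find h := by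
    refine lt_of_le_of_ne (by simpa using hB i) fun heq => hne ?_
    rw [hBi, heq]
  exact Nat.find_min h hlt (hBi ▸ hBI)

theorem stripLastTwo_single (k : ℕ) :
    stripLastTwo (Finsupp.single ((n - 1 : ℕ) : Fin (n+1)) k) = 0 := by
  ext l
  by_cases hl : l = ((n - 1 : ℕ) : Fin (n+1))
  · simp [stripLastTwo, hl]
  · simp [stripLastTwo, hl, Finsupp.update_apply]

theorem doubleSat_eq_top_of_mon_single_mem {I : Ideal (PR K n)} {k : ℕ}
    (hk : mon (Finsupp.single ((n - 1 : ℕ) : Fin (n+1)) k) ∈ I) : doubleSat I = ⊤ := by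
  obtain ⟨k', hgen⟩ := exists_minGen_single ⟨k, hk⟩
  rw [Ideal.eq_top_iff_one, doubleSat]
  refine Ideal.subset_span ⟨_, hgen, ?_⟩
  simp [stripLastTwo_single, mon]

end

theorem constant_hilbPoly_power_of_xnm1_mem_general
    {K : Type*} [Field K] {n : ℕ} (hn : 2 ≤ n) (I : Ideal (PR K n))
    (hmono : IsMonomialIdeal I) (hss : StronglyStable I)
    (c : ℕ) (hp : IsHilbPoly I (Polynomial.C (c : ℚ))) :
    (∃ k : ℕ, 0 < k ∧
      mon (Finsupp.single (((n - 1 : ℕ)) : Fin (n+1)) k) ∈ I) ∧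
    doubleSat I = ⊤ := by
  have hlt : ((n - 1 : ℕ) : Fin (n+1)) < ((n : ℕ) : Fin (n+1)) := by
    rw [Fin.lt_def, Fin.val_natCast, Fin.val_natCast, Nat.mod_eq_of_lt (by omega),
      Nat.mod_eq_of_lt (by omega)]
    omega
  obtain ⟨k, hk⟩ := hss.exists_mon_single_mem hmono hlt hp
  refine ⟨⟨k + 1, k.succ_pos, ?_⟩, doubleSat_eq_top_of_mon_single_mem hk⟩
  rw [Nat.add_comm k 1, Finsupp.single_add]
  exact mon_add_mem _ hk

/-- if a saturated strongly stable ideal has constant Hilbert polynomial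
`c`, then some (positive) power of `x_{n-1}` lies in `I`; equivalently the double
saturation of `I` is the unit ideal. -/
theorem constant_hilbPoly_power_of_xnm1_mem
    {K : Type*} [Field K] {n : ℕ} (hn : 2 ≤ n) (I : Ideal (PR K n))
    (hmono : IsMonomialIdeal I) (hss : StronglyStable I) (hsat : Saturated I)
    (c : ℕ) (hp : IsHilbPoly I (Polynomial.C (c : ℚ))) :
    (∃ k : ℕ, 0 < k ∧
      mon (Finsupp.single (((n - 1 : ℕ)) : Fin (n+1)) k) ∈ I) ∧
    doubleSat I = ⊤ :=
  constant_hilbPoly_power_of_xnm1_mem_general hn I hmono hss c hp
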